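/- ∫₀⁴ (1 + k(λ))·K(k(λ)) dλ = π², where k(λ) = (4-λ)/(4+λ) and K is the complete elliptic integral of the first kind. -/

import Mathlib

open Real

/-- The complete elliptic integral of the first kind. -/
noncomputable def ellipticK (k : ℝ) : ℝ :=
  ∫ t in (0:ℝ)..1, 1 / Real.sqrt ((1 - t^2) * (1 - k^2 * t^2))

/-!
Since `(1 + k) K(k) = 8 ∫₀¹ dt / √((1 - t²)((4 + λ)² - (4 - λ)² t²))` for `k = (4 - λ)/(4 + λ)`,
the integral is a double integral of a positive function. Integrating first in `λ`, which has the
elementary antiderivative `log (√(λ + p) + √(λ + q))` with `p = 4(1 - t)/(1 + t)` and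
`q = 4(1 + t)/(1 - t)`, leaves `8 ∫₀¹ log (1 + √(1 - t²)) / (1 - t²) dt`. Writing
`log (1 + s) / s² = ∫₀¹ da / (s (1 + a s))` and integrating first in `t` instead gives
`∫₀¹ dt / (√(1 - t²) (1 + a √(1 - t²))) = arccos a / √(1 - a²)`, and finally
`∫₀¹ arccos a / √(1 - a²) da = π² / 8`. Both interchanges are Tonelli for positive integrands.
-/

open MeasureTheory Set Function

theorem integral_eq_sub_of_hasDerivAt_of_nonneg {f f' : ℝ → ℝ} {a b : ℝ} (hab : a ≤ b)
    (hcont : ContinuousOn f (Icc a b)) (hderiv : ∀ x ∈ Ioo a b, HasDerivAt f (f' x) x)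
    (hpos : ∀ x ∈ Ioo a b, 0 ≤ f' x) :
    IntervalIntegrable f' volume a b ∧ ∫ x in a..b, f' x = f b - f a := by
  have hint : IntervalIntegrable f' volume a b :=
    (intervalIntegrable_iff_integrableOn_Ioc_of_le hab).2
      (intervalIntegral.integrableOn_deriv_of_nonneg hcont hderiv hpos)
  exact ⟨hint, intervalIntegral.integral_eq_sub_of_hasDerivAt_of_le hab hcont hderiv hint⟩

theorem integral_integral_swap_of_nonneg {α β : Type*} [MeasurableSpace α] [MeasurableSpace β]
    {μ : Measure α} {ν : Measure β} [SFinite μ] [SFinite ν] {f : α → β → ℝ}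
    (hf : AEStronglyMeasurable (uncurry f) (μ.prod ν)) (hf0 : 0 ≤ᵐ[μ.prod ν] uncurry f)
    (hsec : ∀ᵐ x ∂μ, Integrable (f x) ν) (hmarg : Integrable (fun x ↦ ∫ y, f x y ∂ν) μ) :
    ∫ x, ∫ y, f x y ∂ν ∂μ = ∫ y, ∫ x, f x y ∂μ ∂ν := by
  refine integral_integral_swap ((integrable_prod_iff hf).2 ⟨hsec, hmarg.congr ?_⟩)
  filter_upwards [Measure.ae_ae_of_ae_prod hf0] with x hx
  exact integral_congr_ae (hx.mono fun y hy ↦ (Real.norm_of_nonneg hy).symm)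

theorem intervalIntegral_integral_swap_of_nonneg {f : ℝ → ℝ → ℝ} {g : ℝ → ℝ} {a b c d : ℝ}
    (hab : a ≤ b) (hcd : c ≤ d) (hf : Measurable (uncurry f))
    (hf0 : ∀ x ∈ Ioo a b, ∀ y ∈ Ioo c d, 0 ≤ f x y)
    (hsec : ∀ x ∈ Ioo a b, IntervalIntegrable (f x) volume c d)
    (hmarg : ∀ x ∈ Ioo a b, ∫ y in c..d, f x y = g x) (hg : IntervalIntegrable g volume a b) :
    ∫ y in c..d, ∫ x in a..b, f x y = ∫ x in a..b, g x := by
  rw [← intervalIntegral.integral_congr_Ioo_of_le hab hmarg]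
  rw [intervalIntegrable_iff_integrableOn_Ioo_of_le hab] at hg
  simp only [intervalIntegral.integral_of_le hab, intervalIntegral.integral_of_le hcd,
    integral_Ioc_eq_integral_Ioo] at hmarg ⊢
  refine (integral_integral_swap_of_nonneg hf.aestronglyMeasurable ?_
    (ae_restrict_of_forall_mem measurableSet_Ioo fun x hx ↦
      (intervalIntegrable_iff_integrableOn_Ioo_of_le hcd).1 (hsec x hx))
    (hg.congr_fun (fun x hx ↦ (hmarg x hx).symm) measurableSet_Ioo)).symm
  rw [Measure.prod_restrict]
  exact ae_restrict_of_forall_mem (measurableSet_Ioo.prod measurableSet_Ioo)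
    fun p hp ↦ hf0 p.1 hp.1 p.2 hp.2

theorem ellipticK_div (c : ℝ) {b : ℝ} (hb : 0 < b) :
    ellipticK (c / b) = b * ∫ t in (0:ℝ)..1, 1 / √((1 - t^2) * (b^2 - c^2 * t^2)) := by
  rw [ellipticK, ← intervalIntegral.integral_const_mul]
  refine intervalIntegral.integral_congr fun t _ ↦ ?_
  have hscale : (1 - t^2) * (b^2 - c^2 * t^2) = b^2 * ((1 - t^2) * (1 - (c / b)^2 * t^2)) := by
    field_simp
  rw [hscale, sqrt_mul (sq_nonneg b), sqrt_sq hb.le, one_div, one_div, mul_inv, ← mul_assoc,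
    mul_inv_cancel₀ hb.ne', one_mul]

theorem arctan_sqrt_one_sub_div_one_add {a : ℝ} (ha₁ : -1 < a) (ha₂ : a ≤ 1) :
    arctan √((1 - a) / (1 + a)) = arccos a / 2 := by
  have hφ₀ : 0 ≤ arccos a / 2 := by linarith [arccos_nonneg a]
  have hφ₁ : arccos a / 2 < π / 2 := by linarith [arccos_lt_pi.2 ha₁]
  set u := tan (arccos a / 2)
  have hu : 0 ≤ u := tan_nonneg_of_nonneg_of_le_pi_div_two hφ₀ hφ₁.le
  have hcos := cos_eq_two_mul_tan_half_div_one_sub_tan_half_sq (arccos a)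
    (by rw [cos_arccos ha₁.le ha₂]; exact ha₁.ne')
  rw [cos_arccos ha₁.le ha₂] at hcos
  have hu2 : (1 - a) / (1 + a) = u^2 := by
    rw [hcos]; field_simp; ring
  rw [hu2, sqrt_sq hu, arctan_tan (by linarith) hφ₁]

theorem integral_arccos_div_sqrt_one_sub_sq :
    IntervalIntegrable (fun a ↦ arccos a / √(1 - a^2)) volume 0 1 ∧
      ∫ a in (0:ℝ)..1, arccos a / √(1 - a^2) = π^2 / 8 := by
  have hderiv : ∀ a ∈ Ioo (0:ℝ) 1,
      HasDerivAt (fun a ↦ -arccos a ^ 2 / 2) (arccos a / √(1 - a^2)) a := fun a ha ↦ by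
    refine (((hasDerivAt_arccos (by linarith [ha.1]) ha.2.ne).pow 2).neg.div_const 2).congr_deriv ?_
    ring
  obtain ⟨hint, hval⟩ := integral_eq_sub_of_hasDerivAt_of_nonneg zero_le_one
    (by fun_prop) hderiv fun a _ ↦ div_nonneg (arccos_nonneg a) (sqrt_nonneg _)
  refine ⟨hint, hval.trans ?_⟩
  rw [arccos_one, arccos_zero]
  ring

theorem integral_one_div_mul_one_add_mul {s : ℝ} (hs : 0 ≤ s) :
    ∫ a in (0:ℝ)..1, 1 / (s * (1 + a * s)) = log (1 + s) / s^2 := by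
  rcases hs.eq_or_lt with rfl | hs
  · simp
  have hderiv : ∀ a ∈ Icc (0:ℝ) 1,
      HasDerivAt (fun a ↦ log (1 + a * s) / s^2) (1 / (s * (1 + a * s))) a := fun a ha ↦ by
    have hpos : 0 < 1 + a * s := by nlinarith [ha.1]
    refine ((((hasDerivAt_id' a).mul_const s).const_add 1).log hpos.ne').div_const (s^2)
      |>.congr_deriv ?_
    field_simp
  obtain ⟨-, hval⟩ := integral_eq_sub_of_hasDerivAt_of_nonneg zero_le_one
    (fun a ha ↦ (hderiv a ha).continuousAt.continuousWithinAt)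
    (fun a ha ↦ hderiv a (Ioo_subset_Icc_self ha)) fun a ha ↦ by have := ha.1; positivity
  simpa using hval

theorem hasDerivAt_log_sqrt_add_add_sqrt_add {p q x : ℝ} (hp : 0 < x + p) (hq : 0 < x + q) :
    HasDerivAt (fun x ↦ log (√(x + p) + √(x + q))) (1 / (2 * √((x + p) * (x + q)))) x := by
  have hA := ((hasDerivAt_id' x).add_const p).sqrt hp.ne'
  have hB := ((hasDerivAt_id' x).add_const q).sqrt hq.ne'
  have hApos := sqrt_pos.2 hp
  have hBpos := sqrt_pos.2 hq
  refine ((hA.add hB).log (add_pos hApos hBpos).ne').congr_deriv ?_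
  simp only [Pi.add_apply]
  rw [sqrt_mul hp.le]
  field_simp
  ring

theorem integral_one_div_sqrt_add_mul_add {p q a b : ℝ} (hab : a ≤ b) (hp : 0 < a + p)
    (hq : 0 < a + q) :
    IntervalIntegrable (fun x ↦ 1 / √((x + p) * (x + q))) volume a b ∧
      ∫ x in a..b, 1 / √((x + p) * (x + q)) =
        2 * (log (√(b + p) + √(b + q)) - log (√(a + p) + √(a + q))) := by
  have hderiv : ∀ x ∈ Icc a b, HasDerivAt (fun x ↦ 2 * log (√(x + p) + √(x + q)))
      (1 / √((x + p) * (x + q))) x := fun x hx ↦ by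
    refine ((hasDerivAt_log_sqrt_add_add_sqrt_add (by linarith [hx.1])
      (by linarith [hx.1])).const_mul 2).congr_deriv ?_
    field_simp
  obtain ⟨hint, hval⟩ := integral_eq_sub_of_hasDerivAt_of_nonneg hab
    (fun x hx ↦ (hderiv x hx).continuousAt.continuousWithinAt)
    (fun x hx ↦ hderiv x (Ioo_subset_Icc_self hx)) fun x _ ↦ by positivity
  exact ⟨hint, hval.trans (by ring)⟩

theorem two_mul_log_sqrt_add_sqrt_sub {t : ℝ} (ht : t ∈ Ioo (-1:ℝ) 1) :
    2 * (log (√(4 + 4 * (1 - t) / (1 + t)) + √(4 + 4 * (1 + t) / (1 - t)))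
      - log (√(0 + 4 * (1 - t) / (1 + t)) + √(0 + 4 * (1 + t) / (1 - t))))
      = log (1 + √(1 - t^2)) := by
  obtain ⟨ht₁, ht₂⟩ := ht
  have hm : 0 < 1 - t := by linarith
  have hp : 0 < 1 + t := by linarith
  set u := √(1 - t)
  set v := √(1 + t)
  have hu : 0 < u := sqrt_pos.2 hm
  have hv : 0 < v := sqrt_pos.2 hp
  have hu2 : u^2 = 1 - t := sq_sqrt hm.le
  have hv2 : v^2 = 1 + t := sq_sqrt hp.le
  have h8 : √8 ^ 2 = 8 := sq_sqrt (by norm_num)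
  have hsqrt : ∀ {x y : ℝ}, 0 ≤ y → x = y^2 → √x = y := fun hy h ↦ by rw [h, sqrt_sq hy]
  have h4p : √(4 + 4 * (1 - t) / (1 + t)) = √8 / v :=
    hsqrt (by positivity) (by rw [div_pow, h8, hv2]; field_simp; ring)
  have h4q : √(4 + 4 * (1 + t) / (1 - t)) = √8 / u :=
    hsqrt (by positivity) (by rw [div_pow, h8, hu2]; field_simp; ring)
  have h0p : √(0 + 4 * (1 - t) / (1 + t)) = 2 * u / v :=
    hsqrt (by positivity) (by rw [div_pow, mul_pow, hu2, hv2]; ring)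
  have h0q : √(0 + 4 * (1 + t) / (1 - t)) = 2 * v / u :=
    hsqrt (by positivity) (by rw [div_pow, mul_pow, hu2, hv2]; ring)
  have hs : √(1 - t^2) = u * v := hsqrt (by positivity) (by rw [mul_pow, hu2, hv2]; ring)
  rw [h4p, h4q, h0p, h0q, hs, ← log_div (by positivity) (by positivity)]
  rw [show ∀ x : ℝ, 2 * log x = log (x^2) from fun x ↦ by rw [log_pow]; norm_num]
  congr 1
  have huv : u^2 + v^2 = 2 := by rw [hu2, hv2]; ring
  field_simp
  rw [h8, huv]
  linear_combination 8 * huv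

theorem integral_one_div_sqrt_mul_sq_sub_sq {t : ℝ} (ht : t ∈ Ioo (-1:ℝ) 1) :
    IntervalIntegrable (fun l ↦ 1 / √((1 - t^2) * ((4 + l)^2 - (4 - l)^2 * t^2))) volume 0 4 ∧
      ∫ l in (0:ℝ)..4, 1 / √((1 - t^2) * ((4 + l)^2 - (4 - l)^2 * t^2)) =
        log (1 + √(1 - t^2)) / (1 - t^2) := by
  obtain ⟨ht₁, ht₂⟩ := ht
  have hm : 0 < 1 - t := by linarith
  have hp : 0 < 1 + t := by linarith
  have h1t : 0 < 1 - t^2 := by nlinarith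
  have hfactor : ∀ l : ℝ, 1 / √((1 - t^2) * ((4 + l)^2 - (4 - l)^2 * t^2)) =
      (1 - t^2)⁻¹ * (1 / √((l + 4 * (1 - t) / (1 + t)) * (l + 4 * (1 + t) / (1 - t)))) := by
    intro l
    rw [show (1 - t^2) * ((4 + l)^2 - (4 - l)^2 * t^2) =
        (1 - t^2)^2 * ((l + 4 * (1 - t) / (1 + t)) * (l + 4 * (1 + t) / (1 - t))) by
      field_simp; ring, sqrt_mul (sq_nonneg _), sqrt_sq h1t.le, one_div, mul_inv, one_div]
  obtain ⟨hint, hval⟩ := integral_one_div_sqrt_add_mul_add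
    (p := 4 * (1 - t) / (1 + t)) (q := 4 * (1 + t) / (1 - t)) zero_le_four
    (by positivity) (by positivity)
  simp only [hfactor]
  refine ⟨hint.const_mul _, ?_⟩
  rw [intervalIntegral.integral_const_mul, hval, two_mul_log_sqrt_add_sqrt_sub ⟨ht₁, ht₂⟩,
    inv_mul_eq_div]

-- `t / (1 + √(1 - t²)) = tan (arcsin t / 2)`: the half-angle substitution for
-- `∫ dθ / (1 + a cos θ)`.
theorem hasDerivAt_arctan_mul_div_one_add_sqrt (c : ℝ) {t : ℝ} (ht : t ∈ Ioo (-1:ℝ) 1) :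
    HasDerivAt (fun t ↦ arctan (c * t / (1 + √(1 - t^2))))
      (c / (√(1 - t^2) * (1 + c^2 + (1 - c^2) * √(1 - t^2)))) t := by
  have h1t : 0 < 1 - t^2 := by nlinarith [ht.1, ht.2]
  have hs : 0 < √(1 - t^2) := sqrt_pos.2 h1t
  have hs2 : √(1 - t^2) ^ 2 = 1 - t^2 := sq_sqrt h1t.le
  have hsqrt := ((hasDerivAt_pow 2 t).const_sub 1).sqrt h1t.ne'
  refine ((((hasDerivAt_id' t).const_mul c).div (hsqrt.const_add 1)
    (by positivity)).arctan).congr_deriv ?_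
  have hden : 0 < 1 + c^2 + (1 - c^2) * √(1 - t^2) := by nlinarith [sq_nonneg c]
  simp only [Pi.div_apply, Nat.cast_ofNat, Nat.add_one_sub_one, pow_one]
  field_simp
  rw [eq_div_iff (by linarith)]
  linear_combination c * (1 + √(1 - t^2) * (1 - c^2)) * hs2

theorem one_add_mul_sqrt_one_sub_sq_pos {a : ℝ} (ha : -1 < a) (t : ℝ) :
    0 < 1 + a * √(1 - t^2) := by
  have hs0 := sqrt_nonneg (1 - t^2)
  have hs1 : √(1 - t^2) ≤ 1 := sqrt_le_one.2 (by nlinarith)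
  rcases le_total 0 a with h | h <;> nlinarith

theorem integral_one_div_sqrt_one_sub_sq_mul_one_add_mul {a : ℝ} (ha : a ∈ Ioo (-1:ℝ) 1) :
    IntervalIntegrable (fun t ↦ 1 / (√(1 - t^2) * (1 + a * √(1 - t^2)))) volume 0 1 ∧
      ∫ t in (0:ℝ)..1, 1 / (√(1 - t^2) * (1 + a * √(1 - t^2))) = arccos a / √(1 - a^2) := by
  obtain ⟨ha₁, ha₂⟩ := ha
  have hm : 0 < 1 - a := by linarith
  have hp : 0 < 1 + a := by linarith
  set c := √((1 - a) / (1 + a))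
  have hc : 0 < c := sqrt_pos.2 (div_pos hm hp)
  have hc2 : c^2 = (1 - a) / (1 + a) := sq_sqrt (div_pos hm hp).le
  have hr : √(1 - a^2) = c * (1 + a) := by
    rw [← sqrt_sq hp.le, ← sqrt_mul (div_pos hm hp).le]
    congr 1
    field_simp
    ring
  have hderiv : ∀ t ∈ Ioo (0:ℝ) 1, HasDerivAt
      (fun t ↦ 2 / √(1 - a^2) * arctan (c * t / (1 + √(1 - t^2))))
      (1 / (√(1 - t^2) * (1 + a * √(1 - t^2)))) t := fun t ht ↦ by
    refine ((hasDerivAt_arctan_mul_div_one_add_sqrt c ⟨by linarith [ht.1], ht.2⟩).const_mul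
      (2 / √(1 - a^2))).congr_deriv ?_
    have hden : 1 + c^2 + (1 - c^2) * √(1 - t^2) = 2 * (1 + a * √(1 - t^2)) / (1 + a) := by
      rw [hc2]; field_simp; ring
    rw [hden, hr]
    field_simp
  have hcont : ContinuousOn (fun t ↦ 2 / √(1 - a^2) * arctan (c * t / (1 + √(1 - t^2))))
      (Icc 0 1) :=
    (continuous_const.mul (continuous_arctan.comp
      ((continuous_const.mul continuous_id).div (by fun_prop) fun t ↦ by positivity))).continuousOn
  obtain ⟨hint, hval⟩ := integral_eq_sub_of_hasDerivAt_of_nonneg zero_le_one hcont hderiv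
    fun t _ ↦ one_div_nonneg.2 (mul_nonneg (sqrt_nonneg _)
      (one_add_mul_sqrt_one_sub_sq_pos ha₁ t).le)
  have harctan : arctan c = arccos a / 2 := arctan_sqrt_one_sub_div_one_add ha₁ ha₂.le
  refine ⟨hint, hval.trans ?_⟩
  norm_num [harctan]

theorem integral_log_one_add_sqrt_one_sub_sq_div :
    ∫ t in (0:ℝ)..1, log (1 + √(1 - t^2)) / (1 - t^2) = π^2 / 8 := by
  have hlog : ∀ t ∈ uIcc (0:ℝ) 1, log (1 + √(1 - t^2)) / (1 - t^2) =
      ∫ a in (0:ℝ)..1, 1 / (√(1 - t^2) * (1 + a * √(1 - t^2))) := fun t ht ↦ by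
    rw [uIcc_of_le zero_le_one] at ht
    rw [integral_one_div_mul_one_add_mul (sqrt_nonneg _), sq_sqrt (by nlinarith [ht.1, ht.2])]
  rw [intervalIntegral.integral_congr hlog]
  exact (intervalIntegral_integral_swap_of_nonneg zero_le_one zero_le_one (by fun_prop)
    (fun a ha t _ ↦ one_div_nonneg.2 (mul_nonneg (sqrt_nonneg _)
      (one_add_mul_sqrt_one_sub_sq_pos (by linarith [ha.1]) t).le))
    (fun a ha ↦ (integral_one_div_sqrt_one_sub_sq_mul_one_add_mul ⟨by linarith [ha.1], ha.2⟩).1)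
    (fun a ha ↦ (integral_one_div_sqrt_one_sub_sq_mul_one_add_mul ⟨by linarith [ha.1], ha.2⟩).2)
    integral_arccos_div_sqrt_one_sub_sq.1).trans integral_arccos_div_sqrt_one_sub_sq.2

/-- `∫₀⁴ (1 + k(λ))·K(k(λ)) dλ = π²` where `k(λ) = (4-λ)/(4+λ)`. -/
theorem integral_density_eq_pi_sq :
    (∫ lam in (0:ℝ)..4,
        (1 + (4 - lam)/(4 + lam)) * ellipticK ((4 - lam)/(4 + lam))) = π^2 := by
  have hK : ∀ l ∈ uIcc (0:ℝ) 4, (1 + (4 - l) / (4 + l)) * ellipticK ((4 - l) / (4 + l)) =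
      8 * ∫ t in (0:ℝ)..1, 1 / √((1 - t^2) * ((4 + l)^2 - (4 - l)^2 * t^2)) := fun l hl ↦ by
    rw [uIcc_of_le zero_le_four] at hl
    have hb : 0 < 4 + l := by linarith [hl.1]
    rw [ellipticK_div _ hb]
    field_simp
    ring
  -- `log (1 + √(1 - t²)) / (1 - t²)` is integrable on `[0, 1]` since its integral `π² / 8` is
  -- nonzero.
  have hswap := intervalIntegral_integral_swap_of_nonneg zero_le_one zero_le_four (by fun_prop)
    (fun t _ l _ ↦ by positivity)
    (fun t ht ↦ (integral_one_div_sqrt_mul_sq_sub_sq ⟨by linarith [ht.1], ht.2⟩).1)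
    (fun t ht ↦ (integral_one_div_sqrt_mul_sq_sub_sq ⟨by linarith [ht.1], ht.2⟩).2)
    (intervalIntegral.intervalIntegrable_of_integral_ne_zero
      (by rw [integral_log_one_add_sqrt_one_sub_sq_div]; positivity))
  rw [intervalIntegral.integral_congr hK, intervalIntegral.integral_const_mul, hswap,
    integral_log_one_add_sqrt_one_sub_sq_div]
  ring
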